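/- arXiv:2505.08010 — 2 statements merged into one kernel-verified Lean document; each statement's English description precedes it below -/
import Mathlib

section
/- Let Ω be an open subset of ℝⁿ and let f : ℝⁿ → ℝ be differentiable at every point of Ω. Then the supremum over Ω of ‖∇f‖ equals the essential supremum of ‖∇f‖ over Ω with respect to Lebesgue measure on ℝⁿ. -/
/-!
If `‖Df‖ ≤ C` almost everywhere on `Ω`, Fubini shows that for almost every base point `w`
the bound holds at almost every point of the line `t ↦ w + t • h`. Along such a line the
derivative of `t ↦ f (w + t • h)` exists everywhere, hence is measurable, and being a.e. bounded
it is integrable, so the fundamental theorem of calculus gives `‖f (w + h) - f w‖ ≤ C * ‖h‖`.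
Good base points are dense and `f` is continuous, so `f` is `C`-Lipschitz on every ball in `Ω`,
which forces `‖Df‖ ≤ C` at every point of `Ω`.
-/

open MeasureTheory ENNReal NNReal
open Set Filter Interval

variable {E F : Type*} [NormedAddCommGroup E] [NormedSpace ℝ E]
  [NormedAddCommGroup F] [NormedSpace ℝ F] [CompleteSpace F]

theorem norm_sub_le_of_ae_norm_deriv_le {φ : ℝ → F} {a b C : ℝ}
    (hφ : ∀ t ∈ uIcc a b, DifferentiableAt ℝ φ t)
    (hbound : ∀ᵐ t, t ∈ Ι a b → ‖deriv φ t‖ ≤ C) :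
    ‖φ b - φ a‖ ≤ C * |b - a| := by
  have hint : IntervalIntegrable (deriv φ) volume a b := by
    rw [intervalIntegrable_iff]
    exact IntegrableOn.of_bound (by simp [Real.volume_uIoc])
      (stronglyMeasurable_deriv φ).aestronglyMeasurable C
      ((ae_restrict_iff' measurableSet_uIoc).mpr hbound)
  rw [← intervalIntegral.integral_eq_sub_of_hasDerivAt (fun t ht => (hφ t ht).hasDerivAt) hint]
  exact intervalIntegral.norm_integral_le_of_norm_le_const_ae hbound

theorem Convex.norm_add_sub_le_of_ae_nnnorm_fderiv_le {f : E → F} {U : Set E}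
    (hconv : Convex ℝ U) (hf : ∀ x ∈ U, DifferentiableAt ℝ f x) {C : ℝ≥0} {w h : E}
    (hw : w ∈ U) (hwh : w + h ∈ U)
    (hbound : ∀ᵐ t : ℝ, w + t • h ∈ U → ‖fderiv ℝ f (w + t • h)‖₊ ≤ C) :
    ‖f (w + h) - f w‖ ≤ C * ‖h‖ := by
  have hline : ∀ t ∈ uIcc (0 : ℝ) 1, w + t • h ∈ U := fun t ht => by
    rw [uIcc_of_le zero_le_one] at ht
    simpa [add_comm] using hconv.add_smul_mem hw (by simpa using hwh) ht
  have hderiv : ∀ t ∈ uIcc (0 : ℝ) 1,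
      HasDerivAt (fun s : ℝ => f (w + s • h)) (fderiv ℝ f (w + t • h) h) t := fun t ht =>
    (hf _ (hline t ht)).hasFDerivAt.comp_hasDerivAt t
      (((hasDerivAt_id t).smul_const h).const_add w |>.congr_deriv (one_smul ℝ h))
  have hline_bound : ∀ᵐ t, t ∈ Ι (0 : ℝ) 1 → ‖deriv (fun s : ℝ => f (w + s • h)) t‖ ≤ C * ‖h‖ := by
    filter_upwards [hbound] with t htU ht
    rw [(hderiv t (uIoc_subset_uIcc ht)).deriv]
    exact (fderiv ℝ f _).le_of_opNorm_le (htU (hline t (uIoc_subset_uIcc ht))) h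
  simpa using norm_sub_le_of_ae_norm_deriv_le (fun t ht => (hderiv t ht).differentiableAt)
    hline_bound

section Haar

variable [MeasurableSpace E] [BorelSpace E]

theorem ae_ae_add_smul [SecondCountableTopology E] {μ : Measure E} [μ.IsAddRightInvariant]
    [SFinite μ] {p : E → Prop} (hp : ∀ᵐ x ∂μ, p x) (v : E) :
    ∀ᵐ w ∂μ, ∀ᵐ t : ℝ, p (w + t • v) := by
  obtain ⟨S, hS, hSm, hSp⟩ := hp.exists_measurable_mem
  have hmeas : MeasurableSet {q : E × ℝ | q.1 + q.2 • v ∈ S} := hSm.preimage (by fun_prop)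
  have htranslate : ∀ᵐ t : ℝ, ∀ᵐ w ∂μ, w + t • v ∈ S := ae_of_all _ fun t =>
    (measurePreserving_add_right μ (t • v)).quasiMeasurePreserving.ae hS
  filter_upwards [(Measure.ae_ae_comm hmeas).mpr htranslate] with w hw
  exact hw.mono fun t ht => hSp _ ht

variable [FiniteDimensional ℝ E] {μ : Measure E} [μ.IsAddHaarMeasure]

theorem Convex.lipschitzOnWith_of_ae_nnnorm_fderiv_le {f : E → F} {U : Set E}
    (hconv : Convex ℝ U) (hopen : IsOpen U) (hf : ∀ x ∈ U, DifferentiableAt ℝ f x) {C : ℝ≥0}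
    (hbound : ∀ᵐ x ∂μ, x ∈ U → ‖fderiv ℝ f x‖₊ ≤ C) : LipschitzOnWith C f U := by
  refine LipschitzOnWith.of_dist_le_mul fun y hy x hx => ?_
  rw [dist_eq_norm, dist_eq_norm]
  set h := y - x
  have hgood : ∀ᵐ w ∂μ, w ∈ U → w + h ∈ U → ‖f (w + h) - f w‖ ≤ C * ‖h‖ := by
    filter_upwards [ae_ae_add_smul hbound h] with w hw hwU hwhU
    exact hconv.norm_add_sub_le_of_ae_nnnorm_fderiv_le hf hwU hwhU hw
  have hcont : ContinuousAt (fun w => ‖f (w + h) - f w‖) x := by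
    have hshift : ContinuousAt (fun w => f (w + h)) x :=
      (hf y hy).continuousAt.comp_of_eq (continuous_add_const h).continuousAt (by simp [h])
    exact (hshift.sub (hf x hx).continuousAt).norm
  have hdense := (Measure.dense_of_ae hgood).open_subset_closure_inter
    (hopen.inter (hopen.preimage (continuous_add_const h))) (show x ∈ U ∩ (· + h) ⁻¹' U from
      ⟨hx, by simpa [h] using hy⟩)
  simpa [h] using hcont.continuousWithinAt.closure_le hdense continuousWithinAt_const
    fun w hw => hw.2 hw.1.1 hw.1.2

theorem nnnorm_fderiv_le_essSup {f : E → F} {Ω : Set E} (hΩ : IsOpen Ω)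
    (hf : ∀ x ∈ Ω, DifferentiableAt ℝ f x) {x : E} (hx : x ∈ Ω) :
    (‖fderiv ℝ f x‖₊ : ℝ≥0∞) ≤ essSup (fun y => (‖fderiv ℝ f y‖₊ : ℝ≥0∞)) (μ.restrict Ω) := by
  have hbound := (ae_restrict_iff' hΩ.measurableSet).mp
    (ENNReal.ae_le_essSup (fun y => (‖fderiv ℝ f y‖₊ : ℝ≥0∞)) (μ := μ.restrict Ω))
  generalize essSup (fun y => (‖fderiv ℝ f y‖₊ : ℝ≥0∞)) (μ.restrict Ω) = M at hbound ⊢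
  rcases eq_top_or_lt_top M with rfl | hM
  · exact le_top
  lift M to ℝ≥0 using hM.ne with C
  simp only [ENNReal.coe_le_coe] at hbound ⊢
  obtain ⟨ε, hε, hball⟩ := Metric.isOpen_iff.mp hΩ x hx
  have hlip : LipschitzOnWith C f (Metric.ball x ε) :=
    (convex_ball x ε).lipschitzOnWith_of_ae_nnnorm_fderiv_le (μ := μ) Metric.isOpen_ball
      (fun y hy => hf y (hball hy)) (hbound.mono fun y hy hyb => hy (hball hyb))
  exact norm_fderiv_le_of_lipschitzOn ℝ (Metric.ball_mem_nhds x hε) hlip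

end Haar

/-- If `f : ℝⁿ → ℝ` is differentiable at every point of an open set `Ω`, then the pointwise
supremum of `‖∇f‖` over `Ω` equals the essential supremum of `‖∇f‖` over `Ω` with respect to
Lebesgue measure, both interpreted in `[0, ∞]`. -/
theorem stmt_7 {n : ℕ} (Ω : Set (EuclideanSpace ℝ (Fin n))) (hΩ : IsOpen Ω)
    (f : EuclideanSpace ℝ (Fin n) → ℝ)
    (hdiff : ∀ x ∈ Ω, DifferentiableAt ℝ f x) :
    (⨆ x ∈ Ω, (‖fderiv ℝ f x‖₊ : ℝ≥0∞)) =
      essSup (fun x => (‖fderiv ℝ f x‖₊ : ℝ≥0∞)) (volume.restrict Ω) := by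
  refine le_antisymm (iSup₂_le fun x hx => nnnorm_fderiv_le_essSup hΩ hdiff hx) ?_
  refine essSup_le_of_ae_le _ ?_
  filter_upwards [ae_restrict_mem hΩ.measurableSet] with x hx
  exact le_iSup₂ (f := fun x (_ : x ∈ Ω) => (‖fderiv ℝ f x‖₊ : ℝ≥0∞)) x hx
end

section
/- Let Ω be a convex open subset of ℝⁿ and let f : ℝⁿ → ℝ be differentiable at every point of Ω. Let M be the essential supremum of ‖∇f‖ over Ω with respect to Lebesgue measure, and assume M < ∞. Then f is Lipschitz on Ω with constant M: for all x, y ∈ Ω, |f(x) − f(y)| ≤ M · |x − y|. -/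
/-!
Since `‖∇f‖ ≤ M` only almost everywhere, the mean value inequality cannot be applied to the
segment `[y, x]` itself. By Fubini for Haar measure, for almost every translate `w` the bound
holds at almost every point of the segment `[w, w + (x - y)]`, which lies in `Ω` for `w` near `y`;
the fundamental theorem of calculus along that segment gives
`‖f (w + (x - y)) - f w‖ ≤ M ‖x - y‖`. Such `w` accumulate at `y`, and continuity of `f` at `x`
and `y` transfers the bound to `w = y`.
-/

open MeasureTheory ENNReal Set Filter Topology

theorem ae_ae_add_smul_of_ae {E : Type*} [NormedAddCommGroup E] [NormedSpace ℝ E]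
    [MeasurableSpace E] [BorelSpace E] [FiniteDimensional ℝ E] {μ : Measure E}
    [μ.IsAddHaarMeasure] {P : E → Prop} (h : ∀ᵐ z ∂μ, P z) (v : E) :
    ∀ᵐ w ∂μ, ∀ᵐ s : ℝ, P (w + s • v) := by
  obtain ⟨N, hPN, hN, hN0⟩ := exists_measurable_superset_of_null (ae_iff.1 h)
  have hline := (ae_ae_add_linearMap_mem_iff (LinearMap.toSpanSingleton ℝ E v) volume μ
    hN.compl).2 (measure_eq_zero_iff_ae_notMem.1 hN0)
  filter_upwards [hline] with w hw
  filter_upwards [hw] with s hs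
  by_contra hP
  exact hs (hPN hP)

theorem ContinuousAt.le_of_ae_le_of_mem_nhds {X α : Type*} [TopologicalSpace X]
    [MeasurableSpace X] {μ : Measure X} [μ.IsOpenPosMeasure] [LinearOrder α] [TopologicalSpace α]
    [ClosedIicTopology α] {φ : X → α} {x₀ : X} {U : Set X} {c : α} (hφ : ContinuousAt φ x₀)
    (hU : U ∈ 𝓝 x₀) (h : ∀ᵐ w ∂μ, w ∈ U → φ w ≤ c) : φ x₀ ≤ c := by
  by_contra! hlt
  have hpos : 0 < μ (U ∩ {w | c < φ w}) :=
    μ.measure_pos_of_mem_nhds (inter_mem hU (hφ.eventually (eventually_gt_nhds hlt)))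
  refine hpos.ne' (measure_mono_null ?_ (ae_iff.1 h))
  rintro w ⟨hwU, hw⟩ hle
  exact (hle hwU).not_gt hw

section MeanValue

variable {F : Type*} [NormedAddCommGroup F] [NormedSpace ℝ F] [CompleteSpace F]

theorem norm_sub_le_of_ae_norm_deriv_le_s8 {g : ℝ → F} {a b K : ℝ} (hab : a ≤ b)
    (hg : ∀ s ∈ Icc a b, DifferentiableAt ℝ g s) (hK : ∀ᵐ s, s ∈ Icc a b → ‖deriv g s‖ ≤ K) :
    ‖g b - g a‖ ≤ K * (b - a) := by
  have hK' : ∀ᵐ s, s ∈ uIoc a b → ‖deriv g s‖ ≤ K := by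
    filter_upwards [hK] with s hs hsab
    rw [uIoc_of_le hab] at hsab
    exact hs (Ioc_subset_Icc_self hsab)
  have hint : IntervalIntegrable (deriv g) volume a b := by
    rw [intervalIntegrable_iff_integrableOn_Icc_of_le hab]
    exact Measure.integrableOn_of_bounded (M := K) measure_Icc_lt_top.ne
      (aestronglyMeasurable_deriv g _) ((ae_restrict_iff' measurableSet_Icc).2 hK)
  rw [← intervalIntegral.integral_eq_sub_of_hasDerivAt
    (fun s hs ↦ (hg s (uIcc_of_le hab ▸ hs)).hasDerivAt) hint]
  calc ‖∫ s in a..b, deriv g s‖ ≤ K * |b - a| :=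
        intervalIntegral.norm_integral_le_of_norm_le_const_ae hK'
    _ = K * (b - a) := by rw [abs_of_nonneg (sub_nonneg.2 hab)]

theorem norm_add_sub_le_of_ae_norm_fderiv_le {E : Type*} [NormedAddCommGroup E]
    [NormedSpace ℝ E] {f : E → F} {a v : E} {C : ℝ}
    (hf : ∀ s ∈ Icc (0 : ℝ) 1, DifferentiableAt ℝ f (a + s • v))
    (hC : ∀ᵐ s : ℝ, s ∈ Icc (0 : ℝ) 1 → ‖fderiv ℝ f (a + s • v)‖ ≤ C) :
    ‖f (a + v) - f a‖ ≤ C * ‖v‖ := by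
  have hline (s : ℝ) : HasDerivAt (fun t : ℝ ↦ a + t • v) v s := by
    simpa using ((hasDerivAt_id s).smul_const v).const_add a
  have hderiv : ∀ s ∈ Icc (0 : ℝ) 1,
      HasDerivAt (fun t : ℝ ↦ f (a + t • v)) (fderiv ℝ f (a + s • v) v) s := fun s hs ↦
    (hf s hs).hasFDerivAt.comp_hasDerivAt s (hline s)
  have hbound : ∀ᵐ s : ℝ, s ∈ Icc (0 : ℝ) 1 →
      ‖deriv (fun t : ℝ ↦ f (a + t • v)) s‖ ≤ C * ‖v‖ := by
    filter_upwards [hC] with s hs hs01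
    rw [(hderiv s hs01).deriv]
    exact ((fderiv ℝ f _).le_opNorm v).trans
      (mul_le_mul_of_nonneg_right (hs hs01) (norm_nonneg v))
  simpa using norm_sub_le_of_ae_norm_deriv_le_s8 zero_le_one
    (fun s hs ↦ (hderiv s hs).differentiableAt) hbound

end MeanValue

/-- If `f : ℝⁿ → ℝ` is differentiable at every point of a convex open set `Ω` and the essential
supremum `M` of `‖∇f‖` over `Ω` (with respect to Lebesgue measure) is finite, then `f` is
Lipschitz on `Ω` with constant `M`. -/
theorem stmt_8 {n : ℕ} (Ω : Set (EuclideanSpace ℝ (Fin n))) (hΩ : IsOpen Ω)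
    (hconv : Convex ℝ Ω) (f : EuclideanSpace ℝ (Fin n) → ℝ)
    (hdiff : ∀ x ∈ Ω, DifferentiableAt ℝ f x)
    (M : ℝ≥0∞)
    (hM : M = essSup (fun x => (‖fderiv ℝ f x‖₊ : ℝ≥0∞)) (volume.restrict Ω))
    (hMfin : M ≠ ∞) :
    ∀ x ∈ Ω, ∀ y ∈ Ω, |f x - f y| ≤ M.toReal * dist x y := by
  intro x hx y hy
  set v := x - y
  have hbound : ∀ᵐ z, z ∈ Ω → ‖fderiv ℝ f z‖ ≤ M.toReal := by
    rw [← ae_restrict_iff' hΩ.measurableSet]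
    filter_upwards [hM ▸ ae_le_essSup (fun x ↦ (‖fderiv ℝ f x‖₊ : ℝ≥0∞))] with z hz
    simpa using (ENNReal.toReal_le_toReal coe_ne_top hMfin).2 hz
  have hnear : {w | ∀ s ∈ Icc (0 : ℝ) 1, w + s • v ∈ Ω} ∈ 𝓝 y :=
    isCompact_Icc.eventually_forall_of_forall_eventually fun s hs ↦
      (continuous_fst.add (continuous_snd.smul continuous_const)).continuousAt.eventually
        (hΩ.mem_nhds (hconv.add_smul_sub_mem hy hx hs))
  have htranslates : ∀ᵐ w, w ∈ {w | ∀ s ∈ Icc (0 : ℝ) 1, w + s • v ∈ Ω} →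
      ‖f (w + v) - f w‖ ≤ M.toReal * ‖v‖ := by
    filter_upwards [ae_ae_add_smul_of_ae hbound v] with w hw hwΩ
    exact norm_add_sub_le_of_ae_norm_fderiv_le (fun s hs ↦ hdiff _ (hwΩ s hs))
      (hw.mono fun s hs hs01 ↦ hs (hwΩ s hs01))
  have hcont : ContinuousAt (fun w ↦ ‖f (w + v) - f w‖) y :=
    (((hdiff x hx).continuousAt.comp_of_eq (continuousAt_id.add continuousAt_const)
      (add_sub_cancel y x)).sub (hdiff y hy).continuousAt).norm
  simpa [v, dist_eq_norm, Real.norm_eq_abs] using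
    hcont.le_of_ae_le_of_mem_nhds hnear htranslates
end
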